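/- Let G be a nontrivial additive subgroup of ℂ and let λ ∈ ℂ with λ ∉ {0, 1, −1, −2}. Then every transposed Poisson structure on the deformed generalized Heisenberg–Virasoro algebra g(G,λ) is trivial: any commutative associative bilinear multiplication · on g(G,λ) satisfying 2 z·[x,y] = [z·x, y] + [x, z·y] for all x, y, z is identically zero. -/

import Mathlib

open scoped Classical

/-- Index set for the basis of the deformed generalized Heisenberg–Virasoro
algebra `g(G, λ)` (for `λ ∉ {0, 1, -2}`). -/
inductive DGHVIdx (G : AddSubgroup ℂ) : Type
  | L : G → DGHVIdx G
  | I : G → DGHVIdx G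
  | CL : DGHVIdx G

/-!
The left multiplications `mul z` of a transposed Poisson structure are ½-derivations of the Lie
algebra. Reading the ½-derivation identity on pairs of basis vectors in coordinates, and choosing
auxiliary indices in the infinite group `G` away from finitely many bad values, one finds that
every ½-derivation of `g(G, λ)` is a scalar multiple of the identity; the excluded values of `λ`
are those for which one of the resulting linear relations degenerates. Hence `z · x = α(z) x`,
and commutativity `α(z) x = α(x) z` for independent `x`, `z` forces `α = 0`.
-/

def IsHalfDerivation {R L : Type*} [CommRing R] [LieRing L] [LieAlgebra R L]
    (φ : L →ₗ[R] L) : Prop :=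
  ∀ x y : L, (2 : R) • φ ⁅x, y⁆ = ⁅φ x, y⁆ + ⁅x, φ y⁆

theorem AddSubgroup.exists_coe_notMem (G : AddSubgroup ℂ) [Nontrivial G] (s : Finset ℂ) :
    ∃ a : G, (a : ℂ) ∉ s := by
  obtain ⟨g, hg⟩ := exists_ne (0 : G)
  have hinf := (infinite_range_add_nsmul_iff (0 : ℂ) g).mpr (by simpa using hg)
  obtain ⟨_, ⟨n, rfl⟩, hn⟩ := hinf.exists_notMem_finset s
  exact ⟨n • g, by simpa using hn⟩

theorem Module.Basis.repr_map_apply_eq_mul {ι R M : Type*} [CommSemiring R] [AddCommMonoid M]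
    [Module R M] (b : Module.Basis ι R M) (f : M →ₗ[R] M) {k k' : ι} {c : R}
    (h : ∀ j, b.repr (f (b j)) k = c * b.repr (b j) k') (w : M) :
    b.repr (f w) k = c * b.repr w k' := by
  have := b.ext (f₁ := Finsupp.lapply k ∘ₗ b.repr.toLinearMap ∘ₗ f)
    (f₂ := c • (Finsupp.lapply k' ∘ₗ b.repr.toLinearMap)) (by simpa using h)
  simpa using LinearMap.congr_fun this w

theorem LinearMap.eq_zero_of_comm_of_eq_smul_id {ι R M : Type*} [CommRing R] [AddCommGroup M]
    [Module R M] [Nontrivial ι] (b : Module.Basis ι R M) (mul : M →ₗ[R] M →ₗ[R] M)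
    (hcomm : ∀ x y, mul x y = mul y x) (α : M → R)
    (hα : ∀ z, mul z = α z • LinearMap.id) :
    mul = 0 := by
  have hα0 : ∀ j, α (b j) = 0 := fun j => by
    obtain ⟨k, hk⟩ := exists_ne j
    have := congrArg (fun v => b.repr v k) (hcomm (b j) (b k))
    simpa [hα, Finsupp.single_apply, hk] using this
  exact b.ext fun j => by rw [hα, hα0, zero_smul, LinearMap.zero_apply]

theorem IsHalfDerivation.two_mul_repr_apply_lie {ι R L : Type*} [CommRing R] [LieRing L]
    [LieAlgebra R L] {φ : L →ₗ[R] L} (hφ : IsHalfDerivation φ) (b : Module.Basis ι R L)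
    (x y : L) (k : ι) :
    2 * b.repr (φ ⁅x, y⁆) k = -b.repr ⁅y, φ x⁆ k + b.repr ⁅x, φ y⁆ k := by
  have h := hφ x y
  rw [← lie_skew (φ x) y] at h
  simpa only [map_add, map_neg, map_smul, Finsupp.add_apply, Finsupp.neg_apply,
    Finsupp.smul_apply, smul_eq_mul] using congrArg (fun v => b.repr v k) h

structure IsDGHVBasis (G : AddSubgroup ℂ) (lam : ℂ) {Lg : Type*} [LieRing Lg]
    [LieAlgebra ℂ Lg] (bas : Module.Basis (DGHVIdx G) ℂ Lg) : Prop where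
  lie_L_L : ∀ a b : G, ⁅bas (.L a), bas (.L b)⁆ =
    ((b : ℂ) - (a : ℂ)) • bas (.L (a + b)) +
      (if a + b = 0 then ((a : ℂ) ^ 3 - (a : ℂ)) / 12 else 0) • bas .CL
  lie_L_I : ∀ a b : G, ⁅bas (.L a), bas (.I b)⁆ =
    ((b : ℂ) - lam * (a : ℂ)) • bas (.I (a + b))
  lie_I_I : ∀ a b : G, ⁅bas (.I a), bas (.I b)⁆ = 0
  lie_CL : ∀ x : Lg, ⁅bas .CL, x⁆ = 0

namespace IsDGHVBasis

variable {G : AddSubgroup ℂ} {lam : ℂ} {Lg : Type*} [LieRing Lg] [LieAlgebra ℂ Lg]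
  {bas : Module.Basis (DGHVIdx G) ℂ Lg} (hB : IsDGHVBasis G lam bas)
include hB

theorem lie_CL_right (x : Lg) : ⁅x, bas .CL⁆ = 0 := by
  rw [← lie_skew, hB.lie_CL, neg_zero]

theorem lie_I_L (a b : G) :
    ⁅bas (.I a), bas (.L b)⁆ = -(((a : ℂ) - lam * b) • bas (.I (b + a))) := by
  rw [← lie_skew, hB.lie_L_I]

theorem repr_lie_L_apply_L (a i : G) (w : Lg) :
    bas.repr ⁅bas (.L a), w⁆ (.L i) = ((i : ℂ) - 2 * a) * bas.repr w (.L (i - a)) := by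
  refine bas.repr_map_apply_eq_mul (LieAlgebra.ad ℂ Lg (bas (.L a))) (fun j => ?_) w
  cases j with
  | L b =>
    simp only [LieAlgebra.ad_apply, hB.lie_L_L, map_add, map_smul, Finsupp.add_apply,
      Finsupp.smul_apply, Module.Basis.repr_self, Finsupp.single_apply, smul_eq_mul,
      DGHVIdx.L.injEq, reduceCtorEq, if_false, mul_zero, add_zero]
    rcases eq_or_ne b (i - a) with rfl | hb
    · simp only [AddSubgroupClass.coe_sub, add_sub_cancel, ↓reduceIte, mul_one]
      ring
    · have : a + b ≠ i := fun h => hb (by rw [← h]; abel)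
      simp [this, hb]
  | I b => simp [hB.lie_L_I]
  | CL => simp [hB.lie_CL_right]

theorem repr_lie_L_apply_I (a i : G) (w : Lg) :
    bas.repr ⁅bas (.L a), w⁆ (.I i)
      = ((i : ℂ) - (1 + lam) * a) * bas.repr w (.I (i - a)) := by
  refine bas.repr_map_apply_eq_mul (LieAlgebra.ad ℂ Lg (bas (.L a))) (fun j => ?_) w
  cases j with
  | L b => by_cases h : a + b = 0 <;> simp [hB.lie_L_L, h]
  | I b =>
    simp only [LieAlgebra.ad_apply, hB.lie_L_I, map_smul, Finsupp.smul_apply,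
      Module.Basis.repr_self, Finsupp.single_apply, smul_eq_mul, DGHVIdx.I.injEq]
    rcases eq_or_ne b (i - a) with rfl | hb
    · simp only [AddSubgroupClass.coe_sub, add_sub_cancel, ↓reduceIte, mul_one]
      ring
    · have : a + b ≠ i := fun h => hb (by rw [← h]; abel)
      simp [this, hb]
  | CL => simp [hB.lie_CL_right]

theorem repr_lie_L_apply_CL (a : G) (w : Lg) :
    bas.repr ⁅bas (.L a), w⁆ .CL = ((a : ℂ) ^ 3 - a) / 12 * bas.repr w (.L (-a)) := by
  refine bas.repr_map_apply_eq_mul (LieAlgebra.ad ℂ Lg (bas (.L a))) (fun j => ?_) w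
  cases j with
  | L b =>
    simp only [LieAlgebra.ad_apply, hB.lie_L_L, map_add, map_smul, Finsupp.add_apply,
      Finsupp.smul_apply, Module.Basis.repr_self, Finsupp.single_apply, smul_eq_mul,
      DGHVIdx.L.injEq, reduceCtorEq, if_false, if_true, mul_zero, zero_add, mul_one]
    rcases eq_or_ne b (-a) with rfl | hb
    · simp
    · have : a + b ≠ 0 := fun h => hb (eq_neg_of_add_eq_zero_right h)
      simp [this, hb]
  | I b => simp [hB.lie_L_I]
  | CL => simp [hB.lie_CL_right]

theorem repr_lie_I_apply_L (a i : G) (w : Lg) : bas.repr ⁅bas (.I a), w⁆ (.L i) = 0 := by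
  simpa using bas.repr_map_apply_eq_mul (LieAlgebra.ad ℂ Lg (bas (.I a))) (k' := .L i) (c := 0)
    (fun j => by cases j <;> simp [hB.lie_I_L, hB.lie_I_I, hB.lie_CL_right]) w

theorem repr_lie_I_apply_CL (a : G) (w : Lg) : bas.repr ⁅bas (.I a), w⁆ .CL = 0 := by
  simpa using bas.repr_map_apply_eq_mul (LieAlgebra.ad ℂ Lg (bas (.I a))) (k' := .CL) (c := 0)
    (fun j => by cases j <;> simp [hB.lie_I_L, hB.lie_I_I, hB.lie_CL_right]) w

theorem repr_lie_I_apply_I (a i : G) (w : Lg) :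
    bas.repr ⁅bas (.I a), w⁆ (.I i)
      = (lam * ((i : ℂ) - a) - a) * bas.repr w (.L (i - a)) := by
  refine bas.repr_map_apply_eq_mul (LieAlgebra.ad ℂ Lg (bas (.I a))) (fun j => ?_) w
  cases j with
  | L b =>
    simp only [LieAlgebra.ad_apply, hB.lie_I_L, map_neg, map_smul, Finsupp.neg_apply,
      Finsupp.smul_apply, Module.Basis.repr_self, Finsupp.single_apply, smul_eq_mul,
      DGHVIdx.I.injEq, DGHVIdx.L.injEq]
    rcases eq_or_ne b (i - a) with rfl | hb
    · simp
    · have : b + a ≠ i := fun h => hb (by rw [← h]; abel)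
      simp [this, hb]
  | I b => simp [hB.lie_I_I]
  | CL => simp [hB.lie_CL_right]

variable {φ : Lg →ₗ[ℂ] Lg} (hφ : IsHalfDerivation φ)
include hφ

theorem halfDeriv_lie_L_L (a b : G) (k : DGHVIdx G) :
    2 * (((b : ℂ) - a) * bas.repr (φ (bas (.L (a + b)))) k
        + (if a + b = 0 then ((a : ℂ) ^ 3 - a) / 12 else 0) * bas.repr (φ (bas .CL)) k)
      = -bas.repr ⁅bas (.L b), φ (bas (.L a))⁆ k
        + bas.repr ⁅bas (.L a), φ (bas (.L b))⁆ k := by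
  have h := hφ.two_mul_repr_apply_lie bas (bas (.L a)) (bas (.L b)) k
  simpa only [hB.lie_L_L, map_add, map_smul, Finsupp.add_apply, Finsupp.smul_apply,
    smul_eq_mul] using h

theorem halfDeriv_lie_L_L_apply_L (a b i : G) :
    2 * (((b : ℂ) - a) * bas.repr (φ (bas (.L (a + b)))) (.L i)
        + (if a + b = 0 then ((a : ℂ) ^ 3 - a) / 12 else 0) * bas.repr (φ (bas .CL)) (.L i))
      = -(((i : ℂ) - 2 * b) * bas.repr (φ (bas (.L a))) (.L (i - b)))
        + ((i : ℂ) - 2 * a) * bas.repr (φ (bas (.L b))) (.L (i - a)) := by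
  rw [hB.halfDeriv_lie_L_L hφ, hB.repr_lie_L_apply_L, hB.repr_lie_L_apply_L]

theorem halfDeriv_lie_L_L_apply_I (a b i : G) :
    2 * (((b : ℂ) - a) * bas.repr (φ (bas (.L (a + b)))) (.I i)
        + (if a + b = 0 then ((a : ℂ) ^ 3 - a) / 12 else 0) * bas.repr (φ (bas .CL)) (.I i))
      = -(((i : ℂ) - (1 + lam) * b) * bas.repr (φ (bas (.L a))) (.I (i - b)))
        + ((i : ℂ) - (1 + lam) * a) * bas.repr (φ (bas (.L b))) (.I (i - a)) := by
  rw [hB.halfDeriv_lie_L_L hφ, hB.repr_lie_L_apply_I, hB.repr_lie_L_apply_I]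

theorem halfDeriv_lie_L_L_apply_CL (a b : G) :
    2 * (((b : ℂ) - a) * bas.repr (φ (bas (.L (a + b)))) .CL
        + (if a + b = 0 then ((a : ℂ) ^ 3 - a) / 12 else 0) * bas.repr (φ (bas .CL)) .CL)
      = -(((b : ℂ) ^ 3 - b) / 12 * bas.repr (φ (bas (.L a))) (.L (-b)))
        + ((a : ℂ) ^ 3 - a) / 12 * bas.repr (φ (bas (.L b))) (.L (-a)) := by
  rw [hB.halfDeriv_lie_L_L hφ, hB.repr_lie_L_apply_CL, hB.repr_lie_L_apply_CL]

theorem halfDeriv_lie_L_I (a b : G) (k : DGHVIdx G) :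
    2 * (((b : ℂ) - lam * a) * bas.repr (φ (bas (.I (a + b)))) k)
      = -bas.repr ⁅bas (.I b), φ (bas (.L a))⁆ k
        + bas.repr ⁅bas (.L a), φ (bas (.I b))⁆ k := by
  simpa [hB.lie_L_I] using hφ.two_mul_repr_apply_lie bas (bas (.L a)) (bas (.I b)) k

theorem halfDeriv_lie_L_I_apply_L (a b i : G) :
    2 * (((b : ℂ) - lam * a) * bas.repr (φ (bas (.I (a + b)))) (.L i))
      = ((i : ℂ) - 2 * a) * bas.repr (φ (bas (.I b))) (.L (i - a)) := by
  rw [hB.halfDeriv_lie_L_I hφ, hB.repr_lie_I_apply_L, hB.repr_lie_L_apply_L, neg_zero, zero_add]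

theorem halfDeriv_lie_L_I_apply_I (a b i : G) :
    2 * (((b : ℂ) - lam * a) * bas.repr (φ (bas (.I (a + b)))) (.I i))
      = -((lam * ((i : ℂ) - b) - b) * bas.repr (φ (bas (.L a))) (.L (i - b)))
        + ((i : ℂ) - (1 + lam) * a) * bas.repr (φ (bas (.I b))) (.I (i - a)) := by
  rw [hB.halfDeriv_lie_L_I hφ, hB.repr_lie_I_apply_I, hB.repr_lie_L_apply_I]

theorem halfDeriv_lie_L_I_apply_CL (a b : G) :
    2 * (((b : ℂ) - lam * a) * bas.repr (φ (bas (.I (a + b)))) .CL)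
      = ((a : ℂ) ^ 3 - a) / 12 * bas.repr (φ (bas (.I b))) (.L (-a)) := by
  rw [hB.halfDeriv_lie_L_I hφ, hB.repr_lie_I_apply_CL, hB.repr_lie_L_apply_CL, neg_zero, zero_add]

theorem lie_L_halfDeriv_CL (a : G) : ⁅bas (.L a), φ (bas .CL)⁆ = 0 := by
  simpa [hB.lie_CL_right] using (hφ (bas (.L a)) (bas .CL)).symm

theorem halfDeriv_lie_L_CL_apply_L (a i : G) :
    ((i : ℂ) - 2 * a) * bas.repr (φ (bas .CL)) (.L (i - a)) = 0 := by
  rw [← hB.repr_lie_L_apply_L, hB.lie_L_halfDeriv_CL hφ, map_zero, Finsupp.zero_apply]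

theorem halfDeriv_lie_L_CL_apply_I (a i : G) :
    ((i : ℂ) - (1 + lam) * a) * bas.repr (φ (bas .CL)) (.I (i - a)) = 0 := by
  rw [← hB.repr_lie_L_apply_I, hB.lie_L_halfDeriv_CL hφ, map_zero, Finsupp.zero_apply]

theorem repr_halfDeriv_CL_L [Nontrivial G] (t : G) : bas.repr (φ (bas .CL)) (.L t) = 0 := by
  obtain ⟨a, ha⟩ := G.exists_coe_notMem {(t : ℂ)}
  rw [Finset.mem_singleton] at ha
  have h := hB.halfDeriv_lie_L_CL_apply_L hφ a (t + a)
  rw [add_sub_cancel_right] at h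
  refine (mul_eq_zero_iff_left fun hc => ha ?_).mp h
  push_cast at hc
  linear_combination -hc

theorem repr_halfDeriv_CL_I [Nontrivial G] (hlam : lam ≠ 0) (t : G) :
    bas.repr (φ (bas .CL)) (.I t) = 0 := by
  obtain ⟨a, ha⟩ := G.exists_coe_notMem {(t : ℂ) / lam}
  rw [Finset.mem_singleton, eq_div_iff hlam] at ha
  have h := hB.halfDeriv_lie_L_CL_apply_I hφ a (t + a)
  rw [add_sub_cancel_right] at h
  refine (mul_eq_zero_iff_left fun hc => ha ?_).mp h
  push_cast at hc
  linear_combination -hc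

theorem repr_halfDeriv_I_L_of_ne {b i : G} (hi : (i : ℂ) ≠ 2 * b) :
    bas.repr (φ (bas (.I b))) (.L i) = 0 := by
  have h := hB.halfDeriv_lie_L_I_apply_L hφ 0 b i
  simp only [zero_add, sub_zero, ZeroMemClass.coe_zero, mul_zero] at h
  have key : (2 * (b : ℂ) - i) * bas.repr (φ (bas (.I b))) (.L i) = 0 := by
    linear_combination h
  exact (mul_eq_zero_iff_left (sub_ne_zero.mpr hi.symm)).mp key

theorem repr_halfDeriv_I_L [Nontrivial G] (hlam : lam ≠ -1) (b i : G) :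
    bas.repr (φ (bas (.I b))) (.L i) = 0 := by
  have hlam' : 1 + lam ≠ 0 := fun h => hlam (by linear_combination h)
  obtain ⟨a, ha⟩ := G.exists_coe_notMem {(b : ℂ) / (1 + lam), 2 * (b : ℂ) - i}
  simp only [Finset.mem_insert, Finset.mem_singleton, not_or, eq_div_iff hlam'] at ha
  have hi : ((i - a : G) : ℂ) ≠ 2 * (b - a : G) := by
    push_cast
    exact fun h => ha.2 (by linear_combination h)
  have h := hB.halfDeriv_lie_L_I_apply_L hφ a (b - a) i
  rw [add_sub_cancel, hB.repr_halfDeriv_I_L_of_ne hφ hi, mul_zero] at h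
  have key : ((b : ℂ) - (1 + lam) * a) * bas.repr (φ (bas (.I b))) (.L i) = 0 := by
    push_cast at h
    linear_combination h / 2
  exact (mul_eq_zero_iff_left fun hc => ha.1 (by linear_combination -hc)).mp key

theorem repr_halfDeriv_I_CL [Nontrivial G] (hlam : lam ≠ -1) (b : G) :
    bas.repr (φ (bas (.I b))) .CL = 0 := by
  have hlam' : 1 + lam ≠ 0 := fun h => hlam (by linear_combination h)
  obtain ⟨a, ha⟩ := G.exists_coe_notMem {(b : ℂ) / (1 + lam)}
  rw [Finset.mem_singleton, eq_div_iff hlam'] at ha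
  have h := hB.halfDeriv_lie_L_I_apply_CL hφ a (b - a)
  rw [add_sub_cancel, hB.repr_halfDeriv_I_L hφ hlam, mul_zero] at h
  have key : ((b : ℂ) - (1 + lam) * a) * bas.repr (φ (bas (.I b))) .CL = 0 := by
    push_cast at h
    linear_combination h / 2
  exact (mul_eq_zero_iff_left fun hc => ha (by linear_combination -hc)).mp key

theorem repr_halfDeriv_L_L_eq_of_ne [Nontrivial G] {b i : G} (hi : (i : ℂ) ≠ 2 * b) :
    bas.repr (φ (bas (.L b))) (.L i) = bas.repr (φ (bas (.L 0))) (.L (i - b)) := by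
  have h := hB.halfDeriv_lie_L_L_apply_L hφ 0 b i
  simp only [zero_add, sub_zero, ZeroMemClass.coe_zero, mul_zero,
    hB.repr_halfDeriv_CL_L hφ, add_zero] at h
  have key : (2 * (b : ℂ) - i) * (bas.repr (φ (bas (.L b))) (.L i)
      - bas.repr (φ (bas (.L 0))) (.L (i - b))) = 0 := by
    linear_combination h
  exact sub_eq_zero.mp ((mul_eq_zero_iff_left (sub_ne_zero.mpr hi.symm)).mp key)

theorem halfDeriv_L_CL_eq (b : G) :
    2 * b * bas.repr (φ (bas (.L b))) .CL
      = -(((b : ℂ) ^ 3 - b) / 12 * bas.repr (φ (bas (.L 0))) (.L (-b))) := by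
  have h := hB.halfDeriv_lie_L_L_apply_CL hφ 0 b
  simp only [zero_add, sub_zero, ZeroMemClass.coe_zero, neg_zero] at h
  split_ifs at h <;> linear_combination h

/-- The Virasoro cocycle is what forces this: on the centreless Witt algebra the shifts
`L_b ↦ L_{b+t}` are ½-derivations. -/
theorem repr_halfDeriv_L_zero_L [Nontrivial G] {t : G} (ht : t ≠ 0) :
    bas.repr (φ (bas (.L 0))) (.L t) = 0 := by
  have htC : (t : ℂ) ≠ 0 := by simpa using ht
  obtain ⟨a, ha⟩ :=
    G.exists_coe_notMem {0, -(t : ℂ), -(t : ℂ) / 2, (t : ℂ), -2 * (t : ℂ)}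
  simp only [Finset.mem_insert, Finset.mem_singleton, not_or] at ha
  obtain ⟨ha0, hat, hat2, hat', hat2'⟩ := ha
  have r1 : bas.repr (φ (bas (.L a))) (.L (-(-t - a))) = bas.repr (φ (bas (.L 0))) (.L t) := by
    rw [hB.repr_halfDeriv_L_L_eq_of_ne hφ
      (by push_cast; exact fun h => hat' (by linear_combination -h))]
    congr 3; abel
  have r2 : bas.repr (φ (bas (.L (-t - a)))) (.L (-a)) = bas.repr (φ (bas (.L 0))) (.L t) := by
    rw [hB.repr_halfDeriv_L_L_eq_of_ne hφ
      (by push_cast; exact fun h => hat2' (by linear_combination h))]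
    congr 3; abel
  have e1 := hB.halfDeriv_L_CL_eq hφ (-t)
  have e2 := hB.halfDeriv_lie_L_L_apply_CL hφ a (-t - a)
  have hne : a + (-t - a) ≠ 0 := by rw [add_sub_cancel]; exact neg_ne_zero.mpr ht
  rw [neg_neg] at e1
  rw [if_neg hne, add_sub_cancel, r1, r2] at e2
  push_cast at e1 e2
  have key : (t * a * (t + a) * (t + 2 * a)) * bas.repr (φ (bas (.L 0))) (.L t) = 0 := by
    linear_combination 12 * ((t + 2 * a) * e1 - t * e2)
  refine (mul_eq_zero_iff_left ?_).mp key
  refine mul_ne_zero (mul_ne_zero (mul_ne_zero htC ha0) fun h => hat ?_) fun h => hat2 ?_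
  · linear_combination h
  · linear_combination h / 2

theorem repr_halfDeriv_L_L_of_ne [Nontrivial G] {b i : G} (hib : i ≠ b) :
    bas.repr (φ (bas (.L b))) (.L i) = 0 := by
  have hz : ∀ c j : G, (j : ℂ) ≠ 2 * c → j - c = i - b →
      bas.repr (φ (bas (.L c))) (.L j) = 0 := fun c j hj hjc => by
    rw [hB.repr_halfDeriv_L_L_eq_of_ne hφ hj, hjc,
      hB.repr_halfDeriv_L_zero_L hφ (sub_ne_zero.mpr hib)]
  obtain ⟨a, ha⟩ := G.exists_coe_notMem {(b : ℂ) / 2, (i : ℂ) - b, 2 * (b : ℂ) - i}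
  simp only [Finset.mem_insert, Finset.mem_singleton, not_or] at ha
  obtain ⟨hab, hai, hai'⟩ := ha
  have h := hB.halfDeriv_lie_L_L_apply_L hφ a (b - a) i
  rw [add_sub_cancel, hB.repr_halfDeriv_CL_L hφ, mul_zero, add_zero,
    hz a (i - (b - a)) (by push_cast; exact fun h => hai (by linear_combination -h)) (by abel),
    hz (b - a) (i - a) (by push_cast; exact fun h => hai' (by linear_combination h)) (by abel)]
    at h
  have key : ((b : ℂ) - 2 * a) * bas.repr (φ (bas (.L b))) (.L i) = 0 := by
    push_cast at h
    linear_combination h / 2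
  exact (mul_eq_zero_iff_left fun hc => hab (by linear_combination -hc / 2)).mp key

theorem repr_halfDeriv_L_L_self [Nontrivial G] (b : G) :
    bas.repr (φ (bas (.L b))) (.L b) = bas.repr (φ (bas (.L 0))) (.L 0) := by
  rcases eq_or_ne b 0 with rfl | hb
  · rfl
  · rw [hB.repr_halfDeriv_L_L_eq_of_ne hφ, sub_self]
    exact fun h => hb (by simpa using (by linear_combination -h : (b : ℂ) = 0))

theorem repr_halfDeriv_L_CL [Nontrivial G] {b : G} (hb : b ≠ 0) :
    bas.repr (φ (bas (.L b))) .CL = 0 := by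
  have h := hB.halfDeriv_L_CL_eq hφ b
  rw [hB.repr_halfDeriv_L_zero_L hφ (neg_ne_zero.mpr hb), mul_zero, neg_zero] at h
  exact (mul_eq_zero_iff_left (mul_ne_zero two_ne_zero (by simpa using hb))).mp h

theorem halfDeriv_I_I_eq (b i : G) :
    (2 * (b : ℂ) - i) * bas.repr (φ (bas (.I b))) (.I i)
      = ((b : ℂ) - lam * (i - b)) * bas.repr (φ (bas (.L 0))) (.L (i - b)) := by
  have h := hB.halfDeriv_lie_L_I_apply_I hφ 0 b i
  simp only [zero_add, sub_zero, ZeroMemClass.coe_zero, mul_zero] at h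
  linear_combination h

theorem repr_halfDeriv_I_I_of_ne_of_ne [Nontrivial G] {b i : G} (hib : i ≠ b)
    (hi : (i : ℂ) ≠ 2 * b) : bas.repr (φ (bas (.I b))) (.I i) = 0 := by
  have h := hB.halfDeriv_I_I_eq hφ b i
  rw [hB.repr_halfDeriv_L_zero_L hφ (sub_ne_zero.mpr hib), mul_zero] at h
  exact (mul_eq_zero_iff_left (sub_ne_zero.mpr hi.symm)).mp h

theorem repr_halfDeriv_I_I_of_ne [Nontrivial G] (hlam : lam ≠ -1) {b i : G} (hib : i ≠ b) :
    bas.repr (φ (bas (.I b))) (.I i) = 0 := by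
  have hlam' : 1 + lam ≠ 0 := fun h => hlam (by linear_combination h)
  obtain ⟨a, ha⟩ := G.exists_coe_notMem {(b : ℂ) / (1 + lam), 2 * (b : ℂ) - i}
  simp only [Finset.mem_insert, Finset.mem_singleton, not_or, eq_div_iff hlam'] at ha
  have h := hB.halfDeriv_lie_L_I_apply_I hφ a (b - a) i
  rw [add_sub_cancel,
    hB.repr_halfDeriv_L_L_of_ne hφ (fun h => hib (by simpa using congrArg (· + (b - a)) h)),
    hB.repr_halfDeriv_I_I_of_ne_of_ne hφ (b := b - a) (i := i - a)
      (fun h => hib (sub_left_inj.mp h))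
      (by push_cast; exact fun h => ha.2 (by linear_combination h))] at h
  have key : ((b : ℂ) - (1 + lam) * a) * bas.repr (φ (bas (.I b))) (.I i) = 0 := by
    push_cast at h
    linear_combination h / 2
  exact (mul_eq_zero_iff_left fun hc => ha.1 (by linear_combination -hc)).mp key

theorem repr_halfDeriv_I_I_self [Nontrivial G] (hlam : lam ≠ -1) (b : G) :
    bas.repr (φ (bas (.I b))) (.I b) = bas.repr (φ (bas (.L 0))) (.L 0) := by
  have hne : ∀ c : G, c ≠ 0 →
      bas.repr (φ (bas (.I c))) (.I c) = bas.repr (φ (bas (.L 0))) (.L 0) := fun c hc => by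
    have h := hB.halfDeriv_I_I_eq hφ c c
    simp only [sub_self, mul_zero, sub_zero] at h
    have key : (c : ℂ) * (bas.repr (φ (bas (.I c))) (.I c)
        - bas.repr (φ (bas (.L 0))) (.L 0)) = 0 := by
      linear_combination h
    exact sub_eq_zero.mp ((mul_eq_zero_iff_left (by simpa using hc)).mp key)
  rcases eq_or_ne b 0 with rfl | hb
  · obtain ⟨a, ha⟩ := exists_ne (0 : G)
    have h := hB.halfDeriv_lie_L_I_apply_I hφ a (-a) 0
    simp only [add_neg_cancel, neg_neg, zero_sub] at h
    rw [hB.repr_halfDeriv_L_L_self hφ, hne (-a) (neg_ne_zero.mpr ha)] at h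
    have key : (1 + lam) * a * (bas.repr (φ (bas (.I 0))) (.I 0)
        - bas.repr (φ (bas (.L 0))) (.L 0)) = 0 := by
      push_cast at h
      linear_combination -h / 2
    refine sub_eq_zero.mp ((mul_eq_zero_iff_left (mul_ne_zero ?_ (by simpa using ha))).mp key)
    exact fun h => hlam (by linear_combination h)
  · exact hne b hb

theorem halfDeriv_L_I_eq (b i : G) :
    (2 * (b : ℂ) - i) * bas.repr (φ (bas (.L b))) (.I i)
      = ((1 + lam) * b - i) * bas.repr (φ (bas (.L 0))) (.I (i - b)) := by
  have h := hB.halfDeriv_lie_L_L_apply_I hφ 0 b i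
  simp only [zero_add, sub_zero, ZeroMemClass.coe_zero, mul_zero] at h
  split_ifs at h <;> linear_combination h

theorem repr_halfDeriv_L_zero_I [Nontrivial G] (hlam0 : lam ≠ 0) (hlam1 : lam ≠ 1)
    (hlam2 : lam ≠ -2) (i : G) : bas.repr (φ (bas (.L 0))) (.I i) = 0 := by
  obtain ⟨g, hg⟩ := exists_ne (0 : G)
  have e := hB.halfDeriv_lie_L_L_apply_I hφ g (-g) i
  rw [add_neg_cancel, if_pos rfl, hB.repr_halfDeriv_CL_I hφ hlam0, sub_neg_eq_add] at e
  have b1 := hB.halfDeriv_L_I_eq hφ g (i + g)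
  have b2 := hB.halfDeriv_L_I_eq hφ (-g) (i - g)
  rw [add_sub_cancel_right] at b1
  rw [sub_neg_eq_add, sub_add_cancel] at b2
  push_cast at e b1 b2
  have key :
      (2 * (g : ℂ) ^ 3 * (lam + 2) * (lam - 1)) * bas.repr (φ (bas (.L 0))) (.I i) = 0 := by
    linear_combination ((g : ℂ) ^ 2 - (i : ℂ) ^ 2) * e
      + (-(((i : ℂ) + (1 + lam) * g)) * ((g : ℂ) + i)) * b1
      + (-(((i : ℂ) - (1 + lam) * g)) * ((g : ℂ) - i)) * b2
  refine (mul_eq_zero_iff_left ?_).mp key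
  refine mul_ne_zero (mul_ne_zero (mul_ne_zero two_ne_zero (pow_ne_zero 3 (by simpa using hg)))
    fun h => hlam2 ?_) (sub_ne_zero.mpr hlam1)
  linear_combination h

theorem repr_halfDeriv_L_I [Nontrivial G] (hlam0 : lam ≠ 0) (hlam1 : lam ≠ 1)
    (hlam2 : lam ≠ -2) (b i : G) : bas.repr (φ (bas (.L b))) (.I i) = 0 := by
  have hne : ∀ c j : G, (j : ℂ) ≠ 2 * c → bas.repr (φ (bas (.L c))) (.I j) = 0 :=
      fun c j hj => by
    have h := hB.halfDeriv_L_I_eq hφ c j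
    rw [hB.repr_halfDeriv_L_zero_I hφ hlam0 hlam1 hlam2, mul_zero] at h
    exact (mul_eq_zero_iff_left (sub_ne_zero.mpr hj.symm)).mp h
  obtain ⟨a, ha⟩ := G.exists_coe_notMem {(b : ℂ) / 2, (i : ℂ) - b, 2 * (b : ℂ) - i}
  simp only [Finset.mem_insert, Finset.mem_singleton, not_or] at ha
  obtain ⟨hab, hai, hai'⟩ := ha
  have h := hB.halfDeriv_lie_L_L_apply_I hφ a (b - a) i
  rw [add_sub_cancel, hB.repr_halfDeriv_CL_I hφ hlam0,
    hne a (i - (b - a)) (by push_cast; exact fun h => hai (by linear_combination -h)),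
    hne (b - a) (i - a) (by push_cast; exact fun h => hai' (by linear_combination h))] at h
  have key : ((b : ℂ) - 2 * a) * bas.repr (φ (bas (.L b))) (.I i) = 0 := by
    push_cast at h
    linear_combination h / 2
  exact (mul_eq_zero_iff_left fun hc => hab (by linear_combination -hc / 2)).mp key

theorem halfDeriv_central_eq [Nontrivial G] (a : G) :
    2 * a * bas.repr (φ (bas (.L 0))) .CL = ((a : ℂ) ^ 3 - a) / 12 *
      (bas.repr (φ (bas .CL)) .CL - bas.repr (φ (bas (.L 0))) (.L 0)) := by
  have h := hB.halfDeriv_lie_L_L_apply_CL hφ a (-a)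
  rw [add_neg_cancel, if_pos rfl, neg_neg, hB.repr_halfDeriv_L_L_self hφ a,
    hB.repr_halfDeriv_L_L_self hφ (-a)] at h
  push_cast at h
  linear_combination -h / 2

theorem repr_halfDeriv_CL_CL [Nontrivial G] :
    bas.repr (φ (bas .CL)) .CL = bas.repr (φ (bas (.L 0))) (.L 0) := by
  obtain ⟨g, hg⟩ := exists_ne (0 : G)
  have e1 := hB.halfDeriv_central_eq hφ g
  have e2 := hB.halfDeriv_central_eq hφ (g + g)
  push_cast at e2
  have key : (g : ℂ) ^ 3
      * (bas.repr (φ (bas .CL)) .CL - bas.repr (φ (bas (.L 0))) (.L 0)) = 0 := by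
    linear_combination 4 * e1 - 2 * e2
  exact sub_eq_zero.mp ((mul_eq_zero_iff_left (pow_ne_zero 3 (by simpa using hg))).mp key)

theorem repr_halfDeriv_L_zero_CL [Nontrivial G] : bas.repr (φ (bas (.L 0))) .CL = 0 := by
  obtain ⟨g, hg⟩ := exists_ne (0 : G)
  have h := hB.halfDeriv_central_eq hφ g
  rw [hB.repr_halfDeriv_CL_CL hφ, sub_self, mul_zero] at h
  exact (mul_eq_zero_iff_left (mul_ne_zero two_ne_zero (by simpa using hg))).mp h

theorem halfDeriv_basis_eq_smul [Nontrivial G] (hlam0 : lam ≠ 0) (hlam1 : lam ≠ 1)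
    (hlamm1 : lam ≠ -1) (hlam2 : lam ≠ -2) (j : DGHVIdx G) :
    φ (bas j) = bas.repr (φ (bas (.L 0))) (.L 0) • bas j := by
  refine bas.repr.injective (Finsupp.ext fun k => ?_)
  rw [map_smul, bas.repr_self, Finsupp.smul_apply, Finsupp.single_apply, smul_eq_mul]
  cases j with
  | L b =>
    cases k with
    | L i =>
      rcases eq_or_ne i b with rfl | hib
      · simp [hB.repr_halfDeriv_L_L_self hφ]
      · simp [hB.repr_halfDeriv_L_L_of_ne hφ hib, hib.symm]
    | I i => simp [hB.repr_halfDeriv_L_I hφ hlam0 hlam1 hlam2]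
    | CL =>
      rcases eq_or_ne b 0 with rfl | hb
      · simp [hB.repr_halfDeriv_L_zero_CL hφ]
      · simp [hB.repr_halfDeriv_L_CL hφ hb]
  | I b =>
    cases k with
    | L i => simp [hB.repr_halfDeriv_I_L hφ hlamm1]
    | I i =>
      rcases eq_or_ne i b with rfl | hib
      · simp [hB.repr_halfDeriv_I_I_self hφ hlamm1]
      · simp [hB.repr_halfDeriv_I_I_of_ne hφ hlamm1 hib, hib.symm]
    | CL => simp [hB.repr_halfDeriv_I_CL hφ hlamm1]
  | CL =>
    cases k with
    | L i => simp [hB.repr_halfDeriv_CL_L hφ]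
    | I i => simp [hB.repr_halfDeriv_CL_I hφ hlam0]
    | CL => simp [hB.repr_halfDeriv_CL_CL hφ]

theorem halfDeriv_eq_smul_id [Nontrivial G] (hlam0 : lam ≠ 0) (hlam1 : lam ≠ 1)
    (hlamm1 : lam ≠ -1) (hlam2 : lam ≠ -2) :
    φ = bas.repr (φ (bas (.L 0))) (.L 0) • LinearMap.id :=
  bas.ext fun j => hB.halfDeriv_basis_eq_smul hφ hlam0 hlam1 hlamm1 hlam2 j

end IsDGHVBasis

theorem transposedPoisson_dgHV_trivial_general
    (G : AddSubgroup ℂ) [Nontrivial G]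
    (lam : ℂ) (hlam0 : lam ≠ 0) (hlam1 : lam ≠ 1) (hlamm1 : lam ≠ -1)
    (hlam2 : lam ≠ -2)
    (Lg : Type*) [LieRing Lg] [LieAlgebra ℂ Lg]
    (bas : Module.Basis (DGHVIdx G) ℂ Lg)
    (hLL : ∀ a b : G, ⁅bas (DGHVIdx.L a), bas (DGHVIdx.L b)⁆ =
      ((b : ℂ) - (a : ℂ)) • bas (DGHVIdx.L (a + b)) +
        (if a + b = 0 then ((a : ℂ) ^ 3 - (a : ℂ)) / 12 else 0) • bas DGHVIdx.CL)
    (hLI : ∀ a b : G, ⁅bas (DGHVIdx.L a), bas (DGHVIdx.I b)⁆ =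
      ((b : ℂ) - lam * (a : ℂ)) • bas (DGHVIdx.I (a + b)))
    (hII : ∀ a b : G, ⁅bas (DGHVIdx.I a), bas (DGHVIdx.I b)⁆ = 0)
    (hCL : ∀ x : Lg, ⁅bas DGHVIdx.CL, x⁆ = 0)
    (mul : Lg →ₗ[ℂ] Lg →ₗ[ℂ] Lg)
    (hcomm : ∀ x y : Lg, mul x y = mul y x)
    (hcompat : ∀ x y z : Lg,
      (2 : ℂ) • mul z ⁅x, y⁆ = ⁅mul z x, y⁆ + ⁅x, mul z y⁆) :
    mul = 0 := by
  have hB : IsDGHVBasis G lam bas := ⟨hLL, hLI, hII, hCL⟩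
  have : Nontrivial (DGHVIdx G) := ⟨⟨.CL, .L 0, by simp⟩⟩
  exact LinearMap.eq_zero_of_comm_of_eq_smul_id bas mul hcomm _
    fun z => hB.halfDeriv_eq_smul_id (fun x y => hcompat x y z) hlam0 hlam1 hlamm1 hlam2

/-- for `λ ∉ {0, 1, -1, -2}`, every transposed Poisson structure
on `g(G, λ)` is trivial. -/
theorem transposedPoisson_dgHV_trivial
    (G : AddSubgroup ℂ) [Nontrivial G]
    (lam : ℂ) (hlam0 : lam ≠ 0) (hlam1 : lam ≠ 1) (hlamm1 : lam ≠ -1)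
    (hlam2 : lam ≠ -2)
    (Lg : Type*) [LieRing Lg] [LieAlgebra ℂ Lg]
    (bas : Module.Basis (DGHVIdx G) ℂ Lg)
    (hLL : ∀ a b : G, ⁅bas (DGHVIdx.L a), bas (DGHVIdx.L b)⁆ =
      ((b : ℂ) - (a : ℂ)) • bas (DGHVIdx.L (a + b)) +
        (if a + b = 0 then ((a : ℂ) ^ 3 - (a : ℂ)) / 12 else 0) • bas DGHVIdx.CL)
    (hLI : ∀ a b : G, ⁅bas (DGHVIdx.L a), bas (DGHVIdx.I b)⁆ =
      ((b : ℂ) - lam * (a : ℂ)) • bas (DGHVIdx.I (a + b)))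
    (hII : ∀ a b : G, ⁅bas (DGHVIdx.I a), bas (DGHVIdx.I b)⁆ = 0)
    (hCL : ∀ x : Lg, ⁅bas DGHVIdx.CL, x⁆ = 0)
    (mul : Lg →ₗ[ℂ] Lg →ₗ[ℂ] Lg)
    (hcomm : ∀ x y : Lg, mul x y = mul y x)
    (hassoc : ∀ x y z : Lg, mul (mul x y) z = mul x (mul y z))
    (hcompat : ∀ x y z : Lg,
      (2 : ℂ) • mul z ⁅x, y⁆ = ⁅mul z x, y⁆ + ⁅x, mul z y⁆) :
    mul = 0 :=
  transposedPoisson_dgHV_trivial_general G lam hlam0 hlam1 hlamm1 hlam2 Lg bas hLL hLI hII hCL mul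
    hcomm hcompat
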